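/- For all β > 0, x > 0, x' > 0: B_β(x,x') ≤ √β · exp(−β(m(x−x')² + (x−x')⁴/(4mβ²))/(2(x+x')²)) · N(x+x', |x−x'|), where N(p,q) = 8 e^{p/2}(10(p+q)² + (p−q)²)/(15(p+q)³). -/

import Mathlib

/-!
For `t ∈ [-1, 1]` the squared distance `r = x² + x'² - 2 x x' t` lies between `(x - x')²` and
`(x + x')²`; this bounds the Gaussian factor of the integrand uniformly by its value with
`r` replaced by these extremes. What remains is `∫ (1 + t²) / √r dt`, which is elementary: with
`s = √r` a primitive is a polynomial in `s`, and `s` runs from `x + x'` to `|x - x'|`.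
-/

open Real

/-- The Compton redistribution kernel `B_β(x,x')`, written with
`|𝐱' − 𝐱|² = x² + x'² − 2 x x' t` where `t = cos θ`. -/
noncomputable def Bbeta (m β x x' : ℝ) : ℝ :=
  Real.sqrt β * Real.exp ((x + x') / 2) *
    ∫ t in (-1:ℝ)..1,
      (1 + t^2) / Real.sqrt (x^2 + x'^2 - 2*x*x'*t) *
        Real.exp (-(β * (m * (x - x')^2 +
          (x^2 + x'^2 - 2*x*x'*t)^2 / (4 * m * β^2)) / (2 * (x^2 + x'^2 - 2*x*x'*t))))

/-- The majorant profile `N(p,q)`. -/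
noncomputable def Nmaj (p q : ℝ) : ℝ :=
  8 * Real.exp (p / 2) * (10 * (p + q)^2 + (p - q)^2) / (15 * (p + q)^3)

open MeasureTheory Set intervalIntegral

lemma hasDerivAt_primitive_one_add_sq_div_sqrt {A B t : ℝ} (hB : B ≠ 0) (ht : 0 < A - B * t) :
    HasDerivAt (fun u => -(2 / B ^ 3) * ((A ^ 2 + B ^ 2) * √(A - B * u)
        - 2 * A / 3 * √(A - B * u) ^ 3 + √(A - B * u) ^ 5 / 5))
      ((1 + t ^ 2) / √(A - B * t)) t := by
  have hs : HasDerivAt (fun u => √(A - B * u)) (1 / (2 * √(A - B * t)) * -B) t :=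
    (hasDerivAt_sqrt ht.ne').comp t (by simpa using ((hasDerivAt_id t).const_mul B).const_sub A)
  refine ((((hs.const_mul (A ^ 2 + B ^ 2)).sub ((hs.pow 3).const_mul (2 * A / 3))).add
    ((hs.pow 5).div_const 5)).const_mul (-(2 / B ^ 3))).congr_deriv ?_
  have hsq : √(A - B * t) ^ 2 = A - B * t := sq_sqrt ht.le
  have hs0 : √(A - B * t) ≠ 0 := (sqrt_pos.2 ht).ne'
  field_simp
  rw [show √(A - B * t) ^ 4 = (√(A - B * t) ^ 2) ^ 2 by ring, hsq]
  ring

lemma sub_mul_pos_of_lt_one {A B t : ℝ} (hB : 0 < B) (hBA : B ≤ A) (ht : t < 1) :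
    0 < A - B * t := by
  nlinarith [mul_pos hB (sub_pos.2 ht)]

lemma intervalIntegrable_one_add_sq_div_sqrt {A B : ℝ} (hB : 0 < B) (hBA : B ≤ A) :
    IntervalIntegrable (fun t => (1 + t ^ 2) / √(A - B * t)) volume (-1) 1 :=
  (intervalIntegrable_iff_integrableOn_Ioc_of_le (by norm_num)).2 <|
    integrableOn_deriv_of_nonneg (by fun_prop)
      (fun t ht => hasDerivAt_primitive_one_add_sq_div_sqrt hB.ne'
        (sub_mul_pos_of_lt_one hB hBA ht.2))
      fun t _ => by positivity

theorem integral_one_add_sq_div_sqrt {p q : ℝ} (hq : 0 ≤ q) (hqp : q < p) :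
    ∫ t in (-1:ℝ)..1, (1 + t ^ 2) / √((p ^ 2 + q ^ 2) / 2 - (p ^ 2 - q ^ 2) / 2 * t)
      = 8 * (10 * (p + q) ^ 2 + (p - q) ^ 2) / (15 * (p + q) ^ 3) := by
  set A := (p ^ 2 + q ^ 2) / 2
  set B := (p ^ 2 - q ^ 2) / 2
  have hB : 0 < B := by simp only [B]; nlinarith
  have hBA : B ≤ A := by simp only [A, B]; nlinarith
  rw [integral_eq_sub_of_hasDerivAt_of_le (by norm_num) (by fun_prop)
    (fun t ht => hasDerivAt_primitive_one_add_sq_div_sqrt hB.ne'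
      (sub_mul_pos_of_lt_one hB hBA ht.2))
    (intervalIntegrable_one_add_sq_div_sqrt hB hBA)]
  have h₁ : √(A - B * 1) = q := by
    rw [show A - B * 1 = q ^ 2 by ring, sqrt_sq hq]
  have h₂ : √(A - B * (-1)) = p := by
    rw [show A - B * (-1) = p ^ 2 by ring, sqrt_sq (hq.trans hqp.le)]
  simp only [h₁, h₂, A, B]
  have : p + q ≠ 0 := by linarith
  have : p ^ 2 - q ^ 2 ≠ 0 := by nlinarith
  field_simp
  ring

lemma sq_sub_le_cosine_law {x x' t : ℝ} (hxx' : 0 ≤ x * x') (ht : t ≤ 1) :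
    (x - x') ^ 2 ≤ x ^ 2 + x' ^ 2 - 2 * x * x' * t := by
  nlinarith [mul_nonneg hxx' (sub_nonneg.2 ht)]

lemma cosine_law_le_sq_add {x x' t : ℝ} (hxx' : 0 ≤ x * x') (ht : -1 ≤ t) :
    x ^ 2 + x' ^ 2 - 2 * x * x' * t ≤ (x + x') ^ 2 := by
  nlinarith [mul_nonneg hxx' (neg_le_iff_add_nonneg.1 ht)]

theorem integral_one_add_sq_div_sqrt_cosine_law {x x' : ℝ} (hx : 0 < x) (hx' : 0 < x') :
    ∫ t in (-1:ℝ)..1, (1 + t ^ 2) / √(x ^ 2 + x' ^ 2 - 2 * x * x' * t)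
      = 8 * (10 * ((x + x') + |x - x'|) ^ 2 + ((x + x') - |x - x'|) ^ 2)
          / (15 * ((x + x') + |x - x'|) ^ 3) := by
  have hqp : |x - x'| < x + x' := abs_sub_lt_iff.2 ⟨by linarith, by linarith⟩
  rw [← integral_one_add_sq_div_sqrt (abs_nonneg _) hqp]
  congr! 4 with t
  rw [sq_abs]
  ring

lemma gaussian_exponent_le {m β a r P : ℝ} (hm : 0 < m) (hβ : 0 < β) (ha : 0 ≤ a)
    (har : a ≤ r) (hrP : r ≤ P) :
    β * (m * a + a ^ 2 / (4 * m * β ^ 2)) / (2 * P)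
      ≤ β * (m * a + r ^ 2 / (4 * m * β ^ 2)) / (2 * r) := by
  rcases (ha.trans har).eq_or_lt with hr | hr
  · obtain rfl : a = 0 := le_antisymm (hr ▸ har) ha
    simp [← hr]
  -- `a / P ≤ a / r` and `a² / P ≤ r`
  have haa : a * a ≤ r * P := mul_le_mul har (har.trans hrP) ha hr.le
  rw [div_le_div_iff₀ (by linarith) (by linarith)]
  field_simp
  nlinarith [mul_le_mul_of_nonneg_left haa (by positivity : 0 ≤ r * β),
    mul_le_mul_of_nonneg_left hrP (by positivity : 0 ≤ a * m ^ 2 * β ^ 3)]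

lemma integral_mul_le_integral_mul_const {f g : ℝ → ℝ} {a b c : ℝ} (hab : a ≤ b)
    (hf : IntervalIntegrable f volume a b) (hf0 : ∀ t ∈ Icc a b, 0 ≤ f t)
    (hg0 : ∀ t ∈ Icc a b, 0 ≤ g t) (hgc : ∀ t ∈ Icc a b, g t ≤ c) :
    ∫ t in a..b, f t * g t ≤ (∫ t in a..b, f t) * c := by
  rw [← intervalIntegral.integral_mul_const, integral_of_le hab, integral_of_le hab]
  refine integral_mono_of_nonneg ?_ (hf.1.mul_const c) ?_ <;>
    filter_upwards [ae_restrict_mem measurableSet_Ioc] with t ht <;>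
    replace ht := Ioc_subset_Icc_self ht
  · exact mul_nonneg (hf0 t ht) (hg0 t ht)
  · exact mul_le_mul_of_nonneg_left (hgc t ht) (hf0 t ht)

theorem stmt18 (m β x x' : ℝ) (hm : 0 < m) (hβ : 0 < β) (hx : 0 < x) (hx' : 0 < x') :
    Bbeta m β x x'
      ≤ Real.sqrt β *
          Real.exp (-(β * (m * (x - x')^2 + (x - x')^4 / (4 * m * β^2)) /
            (2 * (x + x')^2))) *
          Nmaj (x + x') |x - x'| := by
  have hxx' : 0 ≤ x * x' := (mul_pos hx hx').le
  set E₀ := exp (-(β * (m * (x - x') ^ 2 + (x - x') ^ 4 / (4 * m * β ^ 2)) /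
    (2 * (x + x') ^ 2)))
  have hgauss : ∀ t ∈ Icc (-1:ℝ) 1, exp (-(β * (m * (x - x') ^ 2 +
      (x ^ 2 + x' ^ 2 - 2 * x * x' * t) ^ 2 / (4 * m * β ^ 2)) /
        (2 * (x ^ 2 + x' ^ 2 - 2 * x * x' * t)))) ≤ E₀ := fun t ht => by
    rw [exp_le_exp, neg_le_neg_iff, show (x - x') ^ 4 = ((x - x') ^ 2) ^ 2 by ring]
    exact gaussian_exponent_le hm hβ (sq_nonneg _) (sq_sub_le_cosine_law hxx' ht.2)
      (cosine_law_le_sq_add hxx' ht.1)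
  calc Bbeta m β x x'
      ≤ √β * exp ((x + x') / 2) *
          ((∫ t in (-1:ℝ)..1, (1 + t ^ 2) / √(x ^ 2 + x' ^ 2 - 2 * x * x' * t)) * E₀) := by
        unfold Bbeta
        gcongr
        exact integral_mul_le_integral_mul_const (by norm_num)
          (intervalIntegrable_one_add_sq_div_sqrt (by positivity)
            (two_mul_le_add_sq x x'))
          (fun t _ => by positivity) (fun t _ => (exp_pos _).le) hgauss
    _ = √β * E₀ * Nmaj (x + x') |x - x'| := by
        rw [integral_one_add_sq_div_sqrt_cosine_law hx hx', Nmaj]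
        ring
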